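/- arXiv:1902.08612 — 3 statements merged into one kernel-verified Lean document; each statement's English description precedes it below -/
import Mathlib

section
/- Let L be a Lie algebra and H a subalgebra of L generated by finitely many elements h₁, ..., h_m such that every iterated Lie commutator in the generators h₁, ..., h_m is ad-nilpotent as an operator on L. If H is nilpotent, then there exists a positive integer u such that [L, H, H, ..., H] = 0 with H repeated u times, i.e., (ad H)^u annihilates L. -/
/-!
Work in the algebra `A = Module.End R L`. For a commutator word `w` of weight `j` in the
generators, the operators `ad w` form finite sets `S j`; they are nilpotent, they vanish for
`j > 2 ^ c` when `H` is nilpotent of class `c`, and `[S p, S q] ⊆ S (p + q)`. Since `ad` maps `H`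
into the span `M` of all the `S j`, it suffices that `M ^ U = 0` in the semiring of submodules
of `A`: then `U` brackets with elements of `H` kill `L`.

That `M` is nilpotent follows by downward induction on the weight, adjoining the elements of
`S k` one at a time to the span of the higher weights. The step: if `P` and `a` are nilpotent
and `[a, P] ⊆ P`, then `a P ⊆ P a + P` lets one move a factor from `P` to the front of any
product, so `n` factors from `P + R a` give either `a ^ n = 0` or an element of `P C`, with `C`
the unital subalgebra generated; and `(P C) ^ u ⊆ P ^ u C = 0`.
-/

inductive IsLieCommWord {L : Type*} [LieRing L] (S : Set L) : L → Prop
  | base {x : L} (hx : x ∈ S) : IsLieCommWord S x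
  | bracket {x y : L} : IsLieCommWord S x → IsLieCommWord S y → IsLieCommWord S ⁅x, y⁆

namespace Submodule

variable {R A : Type*} [CommSemiring R] [Semiring A] [Algebra R A]

theorem isNilpotent_sup_of_mul_le_mul_of_le {M N C : Submodule R A} (hM : IsNilpotent M)
    (hN : IsNilpotent N) (hC1 : 1 ≤ C) (hCC : C * C ≤ C) (hMNC : M ⊔ N ≤ C)
    (hCM : C * M ≤ M * C) : IsNilpotent (M ⊔ N) := by
  obtain ⟨u, hu⟩ := hM
  obtain ⟨n, hn⟩ := hN
  have hNpow (k : ℕ) : N ^ k ≤ C := by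
    induction k with
    | zero => exact hC1
    | succ k ih => exact (mul_le_mul' ih (le_sup_right.trans hMNC)).trans hCC
  have hpow (k : ℕ) : (M ⊔ N) ^ k ≤ N ^ k ⊔ M * C := by
    induction k with
    | zero => exact le_sup_left
    | succ k ih =>
      calc (M ⊔ N) ^ (k + 1) ≤ (N ^ k ⊔ M * C) * (M ⊔ N) := by rw [pow_succ]; gcongr
        _ = N ^ k * M ⊔ N ^ (k + 1) ⊔ M * C * (M ⊔ N) := by rw [sup_mul, mul_sup, pow_succ]
        _ ≤ N ^ (k + 1) ⊔ M * C := by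
          refine sup_le (sup_le ?_ le_sup_left) (le_sup_of_le_right ?_)
          · exact le_sup_of_le_right ((mul_le_mul_left (hNpow k) M).trans hCM)
          · rw [mul_assoc]
            exact mul_le_mul_right ((mul_le_mul_right hMNC C).trans hCC) M
  have hMCpow (j : ℕ) : (M * C) ^ j ≤ M ^ j * C := by
    induction j with
    | zero => simpa using hC1
    | succ j ih =>
      calc (M * C) ^ (j + 1) ≤ M ^ j * (C * M) * C := by
            rw [pow_succ]; simp only [← mul_assoc]; gcongr
        _ ≤ M ^ j * (M * C) * C := by gcongr
        _ = M ^ (j + 1) * (C * C) := by rw [pow_succ]; simp only [mul_assoc]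
        _ ≤ M ^ (j + 1) * C := by gcongr
  refine ⟨n * u, le_bot_iff.mp ?_⟩
  calc (M ⊔ N) ^ (n * u) ≤ (M * C) ^ u := by
        rw [pow_mul]; gcongr; simpa [hn] using hpow n
    _ ≤ M ^ u * C := hMCpow u
    _ = ⊥ := by rw [hu, zero_mul]; rfl

theorem isNilpotent_sup_of_mul_le_mul_sup {M N : Submodule R A} (hM : IsNilpotent M)
    (hN : IsNilpotent N) (hNM : N * M ≤ M * N ⊔ M) : IsNilpotent (M ⊔ N) := by
  set E := M ⊔ N
  set C := ⨆ k, E ^ k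
  have hEC (k : ℕ) : E ^ k ≤ C := le_iSup (E ^ ·) k
  have hE : E ≤ C := by simpa using hEC 1
  have hCC : C * C ≤ C := by
    simp only [C, iSup_mul, mul_iSup, ← pow_add]
    exact iSup_le fun i => iSup_le fun j => hEC (j + i)
  have hM_MC : M ≤ M * C := by simpa using mul_le_mul_right (hEC 0) M
  refine isNilpotent_sup_of_mul_le_mul_of_le hM hN (by simpa using hEC 0) hCC hE ?_
  rw [iSup_mul]
  refine iSup_le fun k => ?_
  induction k with
  | zero => simpa using hM_MC
  | succ k ih =>
    calc E ^ (k + 1) * M ≤ E * (M * C) := by rw [pow_succ', mul_assoc]; gcongr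
      _ = (M * M ⊔ N * M) * C := by rw [← mul_assoc, sup_mul]
      _ ≤ (M * C) * C := by
        gcongr
        exact sup_le (mul_le_mul_right (le_sup_left.trans hE) M)
          (hNM.trans (sup_le (mul_le_mul_right (le_sup_right.trans hE) M) hM_MC))
      _ ≤ M * C := by rw [mul_assoc]; exact mul_le_mul_right hCC M

theorem isNilpotent_span_singleton_iff {a : A} : IsNilpotent (span R {a}) ↔ IsNilpotent a := by
  simp only [IsNilpotent, span_pow, Set.singleton_pow, zero_eq_bot, span_singleton_eq_bot]

end Submodule

section

open Submodule

variable {R A : Type*} [CommSemiring R] [Ring A] [Algebra R A]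

theorem isNilpotent_span_insert {s : Set A} {a : A} (hs : IsNilpotent (span R s))
    (ha : IsNilpotent a) (hcomm : ∀ b ∈ s, a * b - b * a ∈ span R s) :
    IsNilpotent (span R (insert a s)) := by
  rw [span_insert, sup_comm]
  refine isNilpotent_sup_of_mul_le_mul_sup hs (isNilpotent_span_singleton_iff.mpr ha) ?_
  rw [span_mul_span, span_le]
  rintro _ ⟨a, rfl, b, hb, rfl⟩
  show a * b ∈ _
  rw [← add_sub_cancel (b * a) (a * b)]
  exact add_mem (mem_sup_left (mul_mem_mul (subset_span hb) (mem_span_singleton_self a)))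
    (mem_sup_right (hcomm b hb))

theorem isNilpotent_span_union_of_finite {s t : Set A} (hs : s.Finite)
    (ht : IsNilpotent (span R t)) (hnil : ∀ a ∈ s, IsNilpotent a)
    (hcomm : ∀ a ∈ s, ∀ b ∈ s ∪ t, a * b - b * a ∈ span R t) :
    IsNilpotent (span R (s ∪ t)) := by
  refine Set.Finite.induction_on_subset (motive := fun F _ => IsNilpotent (span R (F ∪ t)))
    s hs (by simpa using ht) ?_
  intro a F ha hF _ ih
  rw [Set.insert_union]
  refine isNilpotent_span_insert ih (hnil a ha) fun b hb => ?_
  exact span_mono Set.subset_union_right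
    (hcomm a ha b (Set.union_subset_union_left t hF hb))

theorem isNilpotent_span_iUnion_of_graded {S : ℕ → Set A} (c : ℕ) (hS0 : S 0 = ∅)
    (hfin : ∀ j, (S j).Finite) (hzero : ∀ j, c < j → S j ⊆ {0})
    (hnil : ∀ j, ∀ a ∈ S j, IsNilpotent a)
    (hcomm : ∀ p q, ∀ a ∈ S p, ∀ b ∈ S q, a * b - b * a ∈ S (p + q)) :
    IsNilpotent (span R (⋃ j, S j)) := by
  set T : ℕ → Set A := fun k => {x | ∃ j, k ≤ j ∧ x ∈ S j}
  have hT (k : ℕ) : T k = S k ∪ T (k + 1) := by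
    ext x
    refine ⟨fun ⟨j, hj, hx⟩ => hj.eq_or_lt.imp (fun (e : k = j) => e ▸ hx) (⟨j, ·, hx⟩),
      ?_⟩
    rintro (hx | ⟨j, hj, hx⟩)
    exacts [⟨k, le_rfl, hx⟩, ⟨j, by omega, hx⟩]
  have hstep (k : ℕ) (hk : IsNilpotent (span R (T (k + 1)))) : IsNilpotent (span R (T k)) := by
    rw [hT]
    refine isNilpotent_span_union_of_finite (hfin k) hk (hnil k) fun a ha b hb => ?_
    obtain ⟨j, hj, hbj⟩ : b ∈ T k := hT k ▸ hb
    have hj0 : j ≠ 0 := by rintro rfl; simp [hS0] at hbj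
    exact subset_span ⟨k + j, by omega, hcomm k j a ha b hbj⟩
  have htop : IsNilpotent (span R (T (c + 1))) :=
    ⟨1, by rw [pow_one, zero_eq_bot, span_eq_bot]; exact fun x ⟨j, hj, hx⟩ => hzero j hj hx⟩
  have h0 := Nat.decreasingInduction (motive := fun k _ => IsNilpotent (span R (T k)))
    (fun k _ => hstep k) htop (Nat.zero_le _)
  convert h0 using 2
  ext
  simp [T]

end

inductive IsLieWordOfWeight {L : Type*} [LieRing L] (S : Set L) : ℕ → L → Prop
  | base {x : L} (hx : x ∈ S) : IsLieWordOfWeight S 1 x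
  | bracket {p q : ℕ} {x y : L} : IsLieWordOfWeight S p x → IsLieWordOfWeight S q y →
      IsLieWordOfWeight S (p + q) ⁅x, y⁆

namespace IsLieWordOfWeight

variable {L : Type*} [LieRing L] {S : Set L} {n : ℕ} {x : L}

theorem pos (hx : IsLieWordOfWeight S n x) : 0 < n := by
  induction hx <;> omega

theorem isLieCommWord (hx : IsLieWordOfWeight S n x) : IsLieCommWord S x := by
  induction hx with
  | base hx => exact .base hx
  | bracket _ _ ihx ihy => exact .bracket ihx ihy

theorem finite_setOf (hS : S.Finite) (n : ℕ) : {x | IsLieWordOfWeight S n x}.Finite := by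
  induction n using Nat.strong_induction_on with
  | _ n ih =>
    have hbr : (⋃ p < n, ⋃ q < n, Set.image2 (⁅·, ·⁆) {x | IsLieWordOfWeight S p x}
        {x | IsLieWordOfWeight S q x}).Finite :=
      (Set.finite_Iio n).biUnion fun p hp => (Set.finite_Iio n).biUnion fun q hq =>
        (ih p hp).image2 _ (ih q hq)
    refine (hS.union hbr).subset ?_
    rintro x (hx | @⟨p, q, a, b, ha, hb⟩)
    · exact .inl hx
    · have := ha.pos
      have := hb.pos
      simp only [Set.mem_union, Set.mem_iUnion]
      exact .inr ⟨p, by omega, q, by omega, Set.mem_image2_of_mem ha hb⟩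

variable {R : Type*} [CommRing R] [LieAlgebra R L]

theorem mem_lowerCentralSeries (hx : IsLieWordOfWeight S n x) {k : ℕ} (hk : 2 ^ k ≤ n) :
    x ∈ LieModule.lowerCentralSeries R L L k := by
  -- One factor of a bracket of weight `≥ 2 ^ (k + 1)` has weight `≥ 2 ^ k`; this crude bound
  -- avoids the inclusion `⁅γ i, γ j⁆ ⊆ γ (i + j)` of lower central series terms.
  induction hx generalizing k with
  | base =>
    obtain rfl : k = 0 := by
      by_contra hk0
      have := Nat.one_lt_two_pow hk0
      omega
    exact LieSubmodule.mem_top _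
  | @bracket p q x y _ _ ihx ihy =>
    cases k with
    | zero => exact LieSubmodule.mem_top _
    | succ k =>
      rw [LieModule.lowerCentralSeries_succ]
      rw [pow_succ] at hk
      by_cases hp : 2 ^ k ≤ p
      · rw [← lie_skew]
        exact neg_mem (LieSubmodule.lie_mem_lie (LieSubmodule.mem_top y) (ihx hp))
      · exact LieSubmodule.lie_mem_lie (LieSubmodule.mem_top x) (ihy (by omega))

theorem exists_of_image {L' : Type*} [LieRing L'] [LieAlgebra R L'] (f : L' →ₗ⁅R⁆ L)
    {S' : Set L'} (hx : IsLieWordOfWeight (f '' S') n x) :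
    ∃ x', IsLieWordOfWeight S' n x' ∧ f x' = x := by
  induction hx with
  | base hx =>
    obtain ⟨x', hx', rfl⟩ := hx
    exact ⟨x', .base hx', rfl⟩
  | bracket _ _ ihx ihy =>
    obtain ⟨x', hx', rfl⟩ := ihx
    obtain ⟨y', hy', rfl⟩ := ihy
    exact ⟨⁅x', y'⁆, .bracket hx' hy', f.map_lie x' y'⟩

theorem eq_zero_of_lowerCentralSeries_eq_bot {H : LieSubalgebra R L} (hSH : S ⊆ H) {k : ℕ}
    (hk : LieModule.lowerCentralSeries R H H k = ⊥) (hx : IsLieWordOfWeight S n x)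
    (hn : 2 ^ k ≤ n) : x = 0 := by
  rw [← Set.image_preimage_eq_of_subset (f := H.incl) (s := S) (by simpa using hSH)] at hx
  obtain ⟨x', hx', rfl⟩ := hx.exists_of_image H.incl
  have := hx'.mem_lowerCentralSeries (R := R) hn
  rw [hk, LieSubmodule.mem_bot] at this
  simp [this]

theorem coe_lieSpan_subset_span :
    (LieSubalgebra.lieSpan R L S : Set L) ⊆
      Submodule.span R {x | ∃ n, IsLieWordOfWeight S n x} := by
  set W := {x | ∃ n, IsLieWordOfWeight S n x}
  let K : LieSubalgebra R L :=
    { Submodule.span R W with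
      lie_mem' := fun {a b} ha hb => by
        have := Submodule.apply_mem_map₂ (LieAlgebra.ad R L : L →ₗ[R] Module.End R L) ha hb
        rw [Submodule.map₂_span_span] at this
        refine Submodule.span_le.mpr ?_ this
        rintro _ ⟨x, ⟨p, hx⟩, y, ⟨q, hy⟩, rfl⟩
        exact Submodule.subset_span ⟨p + q, hx.bracket hy⟩ }
  exact LieSubalgebra.lieSpan_le (K := K) |>.mpr fun x hx => Submodule.subset_span ⟨1, .base hx⟩

end IsLieWordOfWeight

theorem exists_mem_pow_foldl_lie_eq {R L : Type*} [CommRing R] [LieRing L] [LieAlgebra R L]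
    {M : Submodule R (Module.End R L)} {y : ℕ → L} (hy : ∀ i, LieAlgebra.ad R L (y i) ∈ M)
    (u : ℕ) :
    ∃ φ ∈ M ^ u, ∀ x, (List.range u).foldl (fun acc i => ⁅acc, y i⁆) x = φ x := by
  induction u with
  | zero => exact ⟨1, Submodule.one_le.mp (pow_zero M).ge, fun x => rfl⟩
  | succ u ih =>
    obtain ⟨φ, hφ, hfold⟩ := ih
    refine ⟨-LieAlgebra.ad R L (y u) * φ, ?_, fun x => ?_⟩
    · rw [pow_succ']
      exact Submodule.mul_mem_mul (neg_mem (hy u)) hφ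
    · simp [List.range_succ, List.foldl_append, hfold]

theorem isNilpotent_span_ad_image_lieWords {R L : Type*} [CommRing R] [LieRing L]
    [LieAlgebra R L] {H : LieSubalgebra R L} [LieRing.IsNilpotent H] {S : Set L} (hSH : S ⊆ H)
    (hS : S.Finite) (had : ∀ x, IsLieCommWord S x → IsNilpotent (LieAlgebra.ad R L x)) :
    IsNilpotent (Submodule.span R
      (LieAlgebra.ad R L '' {x | ∃ n, IsLieWordOfWeight S n x})) := by
  obtain ⟨c, hc⟩ := (LieModule.isNilpotent_iff R H H).mp ‹_›
  rw [Set.ofPred_exists, Set.image_iUnion]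
  refine isNilpotent_span_iUnion_of_graded (2 ^ c) ?_
    (fun n => (IsLieWordOfWeight.finite_setOf hS n).image _) ?_ ?_ ?_
  · exact Set.image_eq_empty.mpr (Set.eq_empty_of_forall_notMem fun x hx => hx.pos.false)
  · rintro n hn _ ⟨x, hx, rfl⟩
    rw [hx.eq_zero_of_lowerCentralSeries_eq_bot hSH hc hn.le, map_zero]
    rfl
  · rintro n _ ⟨x, hx, rfl⟩
    exact had x hx.isLieCommWord
  · rintro p q _ ⟨x, hx, rfl⟩ _ ⟨y, hy, rfl⟩
    exact ⟨⁅x, y⁆, hx.bracket hy, LinearMap.ext fun z => lie_lie x y z⟩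

/-- If a Lie subalgebra `H` of `L` is generated by finitely many elements all of whose
iterated commutators are ad-nilpotent on `L`, and `H` is nilpotent, then
`[L, H, …, H] = 0` for some number `u` of copies of `H`. -/
theorem stmt6 {R L : Type*} [CommRing R] [LieRing L] [LieAlgebra R L]
    (m : ℕ) (h : Fin m → L) (H : LieSubalgebra R L)
    (hgen : H = LieSubalgebra.lieSpan R L (Set.range h))
    (had : ∀ x : L, IsLieCommWord (Set.range h) x → ∃ n : ℕ, (LieAlgebra.ad R L x) ^ n = 0)
    (hnil : LieRing.IsNilpotent H) :
    ∃ u : ℕ, 0 < u ∧ ∀ (x : L) (y : ℕ → L), (∀ i, y i ∈ H) →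
      (List.range u).foldl (fun acc i => ⁅acc, y i⁆) x = 0 := by
  subst hgen
  obtain ⟨U, hU⟩ := isNilpotent_span_ad_image_lieWords LieSubalgebra.subset_lieSpan
    (Set.finite_range h) had
  have hadM (z : L) (hz : z ∈ LieSubalgebra.lieSpan R L (Set.range h)) :
      LieAlgebra.ad R L z ∈ Submodule.span R
        (LieAlgebra.ad R L '' {x | ∃ n, IsLieWordOfWeight (Set.range h) n x}) :=
    Submodule.image_span_subset_span (LieAlgebra.ad R L : L →ₗ[R] Module.End R L) _
      ⟨z, IsLieWordOfWeight.coe_lieSpan_subset_span hz, rfl⟩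
  refine ⟨U + 1, U.succ_pos, fun x y hy => ?_⟩
  obtain ⟨φ, hφ, hfold⟩ := exists_mem_pow_foldl_lie_eq (fun i => hadM _ (hy i)) (U + 1)
  rw [pow_succ, hU, zero_mul, Submodule.zero_eq_bot, Submodule.mem_bot] at hφ
  rw [hfold, hφ, LinearMap.zero_apply]
end

section
/- Let G be a group with an N_p-series G = G₁ ≥ G₂ ≥ ⋯ (so [G_i, G_j] ≤ G_{i+j} and G_i^p ≤ G_{pi} for all i, j), and let L*(G) be the associated graded Lie ring over F_p. For x ∈ G, let x* denote the image of x in the homogeneous component G_i/G_{i+1} where i is maximal with x ∈ G_i. Then (ad x*)^p = ad((x^p)*) in L*(G). In particular, if x has finite order t, then x* is ad-nilpotent of index at most t. -/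
open scoped commutatorElement

def engel {G : Type*} [Group G] (g x : G) : ℕ → G
  | 0 => g
  | n + 1 => ⁅engel g x n, x⁆

/-!
Fix `x ∈ S i`, `y ∈ S j` and work with the difference operator `Δ g n = g (n + 1) * (g n)⁻¹` on
sequences `ℕ → G`. The orbit `O n = xⁿ y x⁻ⁿ` is polynomial: its `k`-th differences lie in
`S (j + k i)`, and `Δ` obeys the Leibniz rule up to terms that are `j` levels deeper. Hence
`O` agrees with its Newton interpolant `∏ₖ (Δᵏ O 0) ^ (n choose k)` modulo `S (j + p i + 1)`:
subtracting the interpolant gains `j` levels of depth, and one repeats until the difference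
vanishes. Evaluating at `n = p`, the factors with `0 < k < p` die because `p ∣ (p choose k)` and
`p`-th powers fall deep into the series, which leaves `O p ≡ Δᵖ O 0 * y`, i.e.
`(Δᵖ O 0)⁻¹ ≡ [y, xᵖ]`. On the other hand, the conjugates of `[y, ₖ x]` by powers of `x` are
obtained from `O` by iterating `g ↦ (Δ g)⁻¹`, so `[y, ₚ x] ≡ (Δᵖ O 0) ^ (-1)ᵖ`, which is
`(Δᵖ O 0)⁻¹` because `(-1)ᵖ ≡ -1 (mod p)` and `(Δᵖ O 0)ᵖ` lies deep.

For `xᵗ = 1` write `t = pᵃ m` with `p ∤ m`. Iterating the congruence gives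
`[y, _{pᵃ} x] ≡ [y, x^{pᵃ}]`, and `x^{pᵃ}` lies one level deeper than `S (pᵃ i)` because its
`p`-th power does and its `m`-th power is trivial.
-/

namespace Subgroup

variable {G : Type*} [Group G]

def ModEq (N : Subgroup G) (x y : G) : Prop := (x : G ⧸ N) = y

notation:50 x:51 " ≡[" N "] " y:51 => Subgroup.ModEq N x y

variable {N M : Subgroup G} {x y z x' y' : G}

namespace ModEq

@[refl] protected theorem refl (x : G) : x ≡[N] x := rfl

protected theorem rfl : x ≡[N] x := rfl

protected theorem symm (h : x ≡[N] y) : y ≡[N] x := Eq.symm h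

protected theorem trans (h : x ≡[N] y) (h' : y ≡[N] z) : x ≡[N] z := Eq.trans h h'

instance : Trans (ModEq N) (ModEq N) (ModEq N) where trans := ModEq.trans

theorem of_le (hNM : N ≤ M) (h : x ≡[N] y) : x ≡[M] y :=
  QuotientGroup.eq.2 (hNM (QuotientGroup.eq.1 h))

variable [N.Normal]

protected theorem mul (h : x ≡[N] y) (h' : x' ≡[N] y') : x * x' ≡[N] y * y' := by
  simp only [ModEq, QuotientGroup.mk_mul] at *
  rw [h, h']

protected theorem inv (h : x ≡[N] y) : x⁻¹ ≡[N] y⁻¹ := by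
  simp only [ModEq, QuotientGroup.mk_inv] at *
  rw [h]

protected theorem zpow (h : x ≡[N] y) (k : ℤ) : x ^ k ≡[N] y ^ k := by
  simp only [ModEq, QuotientGroup.mk_zpow] at *
  rw [h]

theorem zpow_neg_one_pow_of_prime {p : ℕ} (hp : p.Prime) (h : x ^ p ≡[N] 1) :
    x ^ ((-1 : ℤ) ^ p) ≡[N] x⁻¹ := by
  rcases hp.eq_two_or_odd' with rfl | hodd
  · calc x ^ ((-1 : ℤ) ^ 2) = x ^ 2 * x⁻¹ := by group
      _ ≡[N] 1 * x⁻¹ := h.mul ModEq.rfl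
      _ = x⁻¹ := one_mul _
  · rw [hodd.neg_one_pow, zpow_neg_one]

end ModEq

theorem modEq_one_iff [N.Normal] : x ≡[N] 1 ↔ x ∈ N := QuotientGroup.eq_one_iff x

theorem modEq_iff_mul_inv_mem [N.Normal] : x ≡[N] y ↔ x * y⁻¹ ∈ N :=
  QuotientGroup.eq_iff_div_mem.trans (by rw [div_eq_mul_inv])

theorem mem_of_pow_mem_of_pow_eq_one {p m : ℕ} (hpm : p.Coprime m) (hp : z ^ p ∈ N)
    (hm : z ^ m = 1) : z ∈ N := by
  obtain ⟨k, hk⟩ := exists_pow_eq_self_of_coprime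
    (hpm.coprime_dvd_right (orderOf_dvd_of_pow_eq_one hm))
  exact hk ▸ pow_mem hp k

end Subgroup

open Subgroup

class IsNSeries {G : Type*} [Group G] (U : ℕ → Subgroup G) : Prop where
  antitone : Antitone U
  commutator_mem : ∀ {a b : ℕ} {x y : G}, x ∈ U a → y ∈ U b → ⁅x, y⁆ ∈ U (a + b)

namespace IsNSeries

variable {G : Type*} [Group G] {U : ℕ → Subgroup G} [IsNSeries U] {a b : ℕ} {x y : G}

theorem normal_of_eq_top (h : U 1 = ⊤) (c : ℕ) : (U c).Normal where
  conj_mem s hs g := by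
    have hg : g ∈ U 1 := h ▸ mem_top g
    rw [show g * s * g⁻¹ = ⁅g, s⁆ * s by group]
    exact mul_mem (IsNSeries.antitone (by omega) (commutator_mem hg hs)) hs

theorem modEq_of_le (hab : a ≤ b) (h : x ≡[U b] y) : x ≡[U a] y :=
  h.of_le (IsNSeries.antitone hab)

variable [∀ c, (U c).Normal]

theorem modEq_one_of_mem (hab : a ≤ b) (h : x ∈ U b) : x ≡[U a] 1 :=
  modEq_one_iff.2 (IsNSeries.antitone hab h)

theorem commutatorElement_modEq_left {z : G} (h : x ≡[U a] y) (hz : z ∈ U b) :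
    ⁅x, z⁆ ≡[U (a + b)] ⁅y, z⁆ := by
  have hw : x * y⁻¹ ∈ U a := modEq_iff_mul_inv_mem.1 h
  have hyz : ⁅y, z⁆ ∈ U b := by
    rw [commutatorElement_def]
    exact mul_mem (Normal.conj_mem inferInstance z hz y) (inv_mem hz)
  refine modEq_iff_mul_inv_mem.2 ?_
  rw [show ⁅x, z⁆ * ⁅y, z⁆⁻¹ = ⁅x * y⁻¹, ⁅y, z⁆⁆ * (⁅y, z⁆ * ⁅x * y⁻¹, z⁆ * ⁅y, z⁆⁻¹) by
    simp only [commutatorElement_def]; group]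
  exact mul_mem (commutator_mem hw hyz) (Normal.conj_mem inferInstance _ (commutator_mem hw hz) _)

end IsNSeries

open IsNSeries

section Differences

variable {G : Type*} [Group G]

def mulDiff (g : ℕ → G) : ℕ → G := fun n => g (n + 1) * (g n)⁻¹

notation "Δ" => mulDiff

theorem mulDiff_mul (g h : ℕ → G) : Δ (g * h) = Δ g * (g * Δ h * g⁻¹) := by
  funext n; simp only [mulDiff, Pi.mul_apply, Pi.inv_apply]; group

theorem mulDiff_inv (g : ℕ → G) : Δ g⁻¹ = g⁻¹ * (Δ g)⁻¹ * g⁻¹⁻¹ := by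
  funext n; simp only [mulDiff, Pi.mul_apply, Pi.inv_apply]; group

-- Every factor involves `Δ g` or `Δ h`: this is why `Δ` deepens commutators as well.
theorem mulDiff_commutatorElement (g h : ℕ → G) :
    Δ ⁅g, h⁆ = Δ g * ⁅g, Δ h⁆ * (Δ g)⁻¹ * ⁅Δ g * Δ h, ⁅g, h⁆⁆ *
      (⁅g, h⁆ * (⁅Δ g, Δ h⁆ * (Δ h * ⁅Δ g, h⁆ * (Δ h)⁻¹)) * ⁅g, h⁆⁻¹) := by
  funext n; simp only [mulDiff, Pi.mul_apply, Pi.inv_apply, commutatorElement_def]; group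

theorem mulDiff_binomial_succ (v : G) (d : ℕ) :
    Δ (fun n => v ^ n.choose (d + 1)) = fun n => v ^ n.choose d := by
  funext n; simp only [mulDiff, Nat.choose_succ_succ' n d, pow_add]; group

theorem mulDiff_binomial_zero (v : G) : Δ (fun n => v ^ n.choose 0) = 1 := by
  funext n; simp [mulDiff]

theorem iterate_mulDiff_one (m : ℕ) : Δ^[m] (1 : ℕ → G) = 1 := by
  induction m with
  | zero => rfl
  | succ m ih => rw [Function.iterate_succ_apply', ih]; funext n; simp [mulDiff]

theorem iterate_mulDiff_binomial_zero (v : G) (m d : ℕ) :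
    Δ^[m] (fun n => v ^ n.choose d) 0 = if m = d then v else 1 := by
  induction m generalizing d with
  | zero => cases d <;> simp
  | succ m ih =>
    cases d with
    | zero => rw [Function.iterate_succ_apply, mulDiff_binomial_zero, iterate_mulDiff_one]; rfl
    | succ d => simp [mulDiff_binomial_succ, ih]

theorem modEq_one_of_iterate_mulDiff_modEq_one {N : Subgroup G} [N.Normal] {h : ℕ → G} {B : ℕ}
    (h0 : ∀ m ≤ B, Δ^[m] h 0 ≡[N] 1) {n : ℕ} (hn : n ≤ B) : h n ≡[N] 1 := by
  suffices ∀ n m, m + n ≤ B → Δ^[m] h n ≡[N] 1 from this n 0 (by omega)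
  intro n
  induction n with
  | zero => exact fun m hm => h0 m (by omega)
  | succ n ih =>
    intro m hm
    have hstep : Δ^[m] h (n + 1) = Δ^[m + 1] h n * Δ^[m] h n := by
      simp [Function.iterate_succ_apply', mulDiff]
    rw [hstep]
    simpa using (ih (m + 1) (by omega)).mul (ih m (by omega))

end Differences

section PolySeq

variable {G : Type*} [Group G] {U : ℕ → Subgroup G} {i : ℕ}

/-- Polynomial sequences of level `ℓ` when the variable has degree `i`: their `k`-th differences
lie in `U (ℓ + k * i)`. They are generated from binomial sequences so that closure under `Δ` can be
proved by induction. -/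
inductive IsPolySeq (U : ℕ → Subgroup G) (i : ℕ) : ℕ → (ℕ → G) → Prop
  | binomial {ℓ d : ℕ} {v : G} (hv : v ∈ U (ℓ + d * i)) :
      IsPolySeq U i ℓ fun n => v ^ n.choose d
  | mul {ℓ : ℕ} {g h : ℕ → G} : IsPolySeq U i ℓ g → IsPolySeq U i ℓ h → IsPolySeq U i ℓ (g * h)
  | inv {ℓ : ℕ} {g : ℕ → G} : IsPolySeq U i ℓ g → IsPolySeq U i ℓ g⁻¹
  | commutatorElement {a b : ℕ} {g h : ℕ → G} :
      IsPolySeq U i a g → IsPolySeq U i b h → IsPolySeq U i (a + b) ⁅g, h⁆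
  | mono {ℓ ℓ' : ℕ} {g : ℕ → G} : IsPolySeq U i ℓ' g → ℓ ≤ ℓ' → IsPolySeq U i ℓ g

namespace IsPolySeq

variable {a ℓ : ℕ} {g h : ℕ → G}

theorem const {c : G} (hc : c ∈ U ℓ) : IsPolySeq U i ℓ fun _ => c := by
  simpa using binomial (i := i) (d := 0) (by simpa using hc)

theorem one : IsPolySeq U i ℓ 1 := const (one_mem _)

theorem pow {c : G} (hc : c ∈ U i) : IsPolySeq U i 0 fun n => c ^ n := by
  simpa using binomial (ℓ := 0) (d := 1) (by simpa using hc)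

theorem conj (hg : IsPolySeq U i a g) (hh : IsPolySeq U i ℓ h) :
    IsPolySeq U i ℓ (g * h * g⁻¹) := by
  rw [show g * h * g⁻¹ = ⁅g, h⁆ * h by group]
  exact ((hg.commutatorElement hh).mono (Nat.le_add_left _ _)).mul hh

theorem mulDiff (hg : IsPolySeq U i ℓ g) : IsPolySeq U i (ℓ + i) (Δ g) := by
  induction hg with
  | @binomial ℓ d v hv =>
    cases d with
    | zero => rw [mulDiff_binomial_zero]; exact one
    | succ d =>
      rw [mulDiff_binomial_succ]
      exact binomial (by rwa [add_assoc, ← one_add_mul, add_comm 1])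
  | mul hg _ ihg ihh => rw [mulDiff_mul]; exact ihg.mul (hg.conj ihh)
  | inv hg ihg => rw [mulDiff_inv]; exact hg.inv.conj ihg.inv
  | @commutatorElement a b g h hg hh ihg ihh =>
    rw [mulDiff_commutatorElement]
    have hgh := hg.commutatorElement hh
    have h₁ : IsPolySeq U i (a + b + i) ⁅g, Δ h⁆ := (hg.commutatorElement ihh).mono (by omega)
    have h₂ : IsPolySeq U i (a + b + i) ⁅Δ g * Δ h, ⁅g, h⁆⁆ :=
      (((ihg.mono (Nat.le_add_left _ _)).mul (ihh.mono (Nat.le_add_left _ _))).commutatorElement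
        hgh).mono (by omega)
    have h₃ : IsPolySeq U i (a + b + i) ⁅Δ g, Δ h⁆ := (ihg.commutatorElement ihh).mono (by omega)
    have h₄ : IsPolySeq U i (a + b + i) ⁅Δ g, h⁆ := (ihg.commutatorElement hh).mono (by omega)
    exact ((ihg.conj h₁).mul h₂).mul (hgh.conj (h₃.mul (ihh.conj h₄)))
  | mono _ hle ih => exact ih.mono (by omega)

theorem iterate_mulDiff (hg : IsPolySeq U i ℓ g) (k : ℕ) :
    IsPolySeq U i (ℓ + k * i) (Δ^[k] g) := by
  induction k with
  | zero => simpa using hg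
  | succ k ih =>
    rw [Function.iterate_succ_apply', add_one_mul, ← add_assoc]
    exact ih.mulDiff

variable [IsNSeries U]

theorem mem (hg : IsPolySeq U i ℓ g) (n : ℕ) : g n ∈ U ℓ := by
  induction hg with
  | binomial hv => exact pow_mem (IsNSeries.antitone (Nat.le_add_right _ _) hv) _
  | mul _ _ ihg ihh => exact mul_mem ihg ihh
  | inv _ ihg => exact inv_mem ihg
  | commutatorElement _ _ ihg ihh => exact commutator_mem ihg ihh
  | mono _ hle ih => exact IsNSeries.antitone hle ih

theorem iterate_mulDiff_mem (hg : IsPolySeq U i ℓ g) (k n : ℕ) : Δ^[k] g n ∈ U (ℓ + k * i) :=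
  (hg.iterate_mulDiff k).mem n

variable [∀ c, (U c).Normal]

theorem iterate_mulDiff_mul_modEq {b : ℕ} {u v : ℕ → G} (hu : IsPolySeq U i a u)
    (hv : IsPolySeq U i b v) (K n : ℕ) :
    Δ^[K] (u * v) n ≡[U (a + b + K * i)] Δ^[K] u n * Δ^[K] v n := by
  induction K generalizing a b u v n with
  | zero => exact ModEq.rfl
  | succ K ih =>
    have conj_modEq {c m : ℕ} {q w : ℕ → G} (hq : IsPolySeq U i c q) (hw : IsPolySeq U i m w)
        (n : ℕ) : Δ^[K] (q * w * q⁻¹) n ≡[U (c + m + K * i)] Δ^[K] w n := by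
      have hqw := hq.commutatorElement hw
      rw [show q * w * q⁻¹ = ⁅q, w⁆ * w by group]
      calc _ ≡[U (c + m + K * i)] Δ^[K] ⁅q, w⁆ n * Δ^[K] w n :=
            modEq_of_le (by omega) (ih hqw hw n)
        _ ≡[U (c + m + K * i)] 1 * Δ^[K] w n :=
            (modEq_one_of_mem le_rfl (hqw.iterate_mulDiff_mem K n)).mul ModEq.rfl
        _ = Δ^[K] w n := one_mul _
    simp only [Function.iterate_succ_apply, mulDiff_mul]
    calc _ ≡[U (a + b + (K + 1) * i)] Δ^[K] (Δ u) n * Δ^[K] (u * Δ v * u⁻¹) n :=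
          modEq_of_le (by grind) (ih hu.mulDiff (hu.conj hv.mulDiff) n)
      _ ≡[U (a + b + (K + 1) * i)] _ :=
          ModEq.rfl.mul (modEq_of_le (by grind) (conj_modEq hu hv.mulDiff n))

theorem iterate_mulDiff_inv_modEq (hg : IsPolySeq U i ℓ g) (K n : ℕ) :
    Δ^[K] g⁻¹ n ≡[U (ℓ + ℓ + K * i)] (Δ^[K] g n)⁻¹ := by
  have h := hg.iterate_mulDiff_mul_modEq hg.inv K n
  rw [mul_inv_cancel, iterate_mulDiff_one, Pi.one_apply] at h
  calc Δ^[K] g⁻¹ n = (Δ^[K] g n)⁻¹ * (Δ^[K] g n * Δ^[K] g⁻¹ n) := by group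
    _ ≡[U (ℓ + ℓ + K * i)] (Δ^[K] g n)⁻¹ * 1 := ModEq.rfl.mul h.symm
    _ = (Δ^[K] g n)⁻¹ := mul_one _

theorem iterate_inv_mulDiff_modEq (hg : IsPolySeq U i ℓ g) (m n : ℕ) :
    (fun u => (Δ u)⁻¹)^[m] g n ≡[U (ℓ + ℓ + m * i)] Δ^[m] g n ^ ((-1 : ℤ) ^ m) := by
  induction m generalizing ℓ g n with
  | zero => simp only [Function.iterate_zero, id, pow_zero, zpow_one]; rfl
  | succ m ih =>
    simp only [Function.iterate_succ_apply]
    calc _ ≡[U (ℓ + ℓ + (m + 1) * i)] Δ^[m] (Δ g)⁻¹ n ^ ((-1 : ℤ) ^ m) :=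
          modEq_of_le (by grind) (ih hg.mulDiff.inv n)
      _ ≡[U (ℓ + ℓ + (m + 1) * i)] (Δ^[m] (Δ g) n)⁻¹ ^ ((-1 : ℤ) ^ m) :=
          (modEq_of_le (by grind) (hg.mulDiff.iterate_mulDiff_inv_modEq m n)).zpow _
      _ = _ := by rw [← zpow_neg_one, ← zpow_mul, pow_succ, mul_comm]

end IsPolySeq

end PolySeq

section Newton

variable {G : Type*} [Group G]

def newtonSeq (w : ℕ → G) : ℕ → ℕ → G
  | 0 => fun n => w 0 ^ n.choose 0
  | N + 1 => (fun n => w (N + 1) ^ n.choose (N + 1)) * newtonSeq w N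

theorem newtonSeq_apply_zero (w : ℕ → G) (N : ℕ) : newtonSeq w N 0 = w 0 := by
  induction N with
  | zero => simp [newtonSeq]
  | succ N ih => simp [newtonSeq, ih]

variable {U : ℕ → Subgroup G} {i c N p : ℕ} {w : ℕ → G}

theorem isPolySeq_newtonSeq (hw : ∀ k ≤ N, w k ∈ U (c + k * i)) :
    IsPolySeq U i c (newtonSeq w N) := by
  induction N with
  | zero => exact .binomial (hw 0 le_rfl)
  | succ N ih => exact (IsPolySeq.binomial (hw _ le_rfl)).mul (ih fun k hk => hw k (by omega))

theorem pow_choose_mem (hp : p.Prime) (hpow : ∀ a, ∀ x ∈ U a, x ^ p ∈ U (p * a))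
    {k a : ℕ} {v : G} (hk : k ≠ 0) (hkp : k < p) (hv : v ∈ U a) :
    v ^ p.choose k ∈ U (p * a) := by
  obtain ⟨e, he⟩ := hp.dvd_choose_self hk hkp
  rw [he, pow_mul]
  exact pow_mem (hpow a v hv) e

variable [IsNSeries U] [∀ c, (U c).Normal]

theorem iterate_mulDiff_newtonSeq_modEq (hw : ∀ k ≤ N, w k ∈ U (c + k * i)) (m : ℕ) :
    Δ^[m] (newtonSeq w N) 0 ≡[U (c + c + m * i)] (if m ≤ N then w m else 1) := by
  induction N with
  | zero =>
    simp only [newtonSeq, iterate_mulDiff_binomial_zero, nonpos_iff_eq_zero]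
    split_ifs with hm
    · rw [hm]
    · rfl
  | succ N ih =>
    have hN := isPolySeq_newtonSeq (N := N) fun k hk => hw k (by omega)
    refine ((IsPolySeq.binomial (hw _ le_rfl)).iterate_mulDiff_mul_modEq hN m 0).trans ?_
    refine (ModEq.rfl.mul (ih fun k hk => hw k (by omega))).trans ?_
    have hif : ((if m = N + 1 then w (N + 1) else 1) * if m ≤ N then w m else 1) =
        if m ≤ N + 1 then w m else 1 := by
      split_ifs <;> first | omega | simp_all
    rw [iterate_mulDiff_binomial_zero, hif]

theorem newtonSeq_apply_prime_modEq (hp : p.Prime) (hpow : ∀ a, ∀ x ∈ U a, x ^ p ∈ U (p * a))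
    (hw : ∀ k ≤ p, w k ∈ U (c + k * i)) :
    newtonSeq w p p ≡[U (p * (c + i))] w p * w 0 := by
  have low : ∀ N < p, newtonSeq w N p ≡[U (p * (c + i))] w 0 := by
    intro N hN
    induction N with
    | zero => simp only [newtonSeq, Nat.choose_zero_right, pow_one]; rfl
    | succ N ih =>
      have hvanish := pow_choose_mem hp hpow (Nat.succ_ne_zero N) hN (hw (N + 1) hN.le)
      calc newtonSeq w (N + 1) p ≡[U (p * (c + i))] 1 * w 0 :=
            (modEq_one_of_mem (Nat.mul_le_mul_left _ (by nlinarith)) hvanish).mul (ih (by omega))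
        _ = w 0 := one_mul _
  obtain ⟨q, rfl⟩ : ∃ q, p = q + 1 := ⟨p - 1, (Nat.sub_add_cancel hp.one_lt.le).symm⟩
  calc newtonSeq w (q + 1) (q + 1) = w (q + 1) * newtonSeq w q (q + 1) := by simp [newtonSeq]
    _ ≡[U ((q + 1) * (c + i))] w (q + 1) * w 0 := ModEq.rfl.mul (low q (by omega))

theorem IsPolySeq.iterate_mulDiff_newtonSeq_inv_mul_mem {j : ℕ} {h : ℕ → G}
    (hh : IsPolySeq U i j h) (hjc : j ≤ c) (hdeep : ∀ m ≤ N, Δ^[m] h 0 ∈ U (c + m * i)) :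
    ∀ m ≤ N, Δ^[m] ((newtonSeq (fun k => Δ^[k] h 0) N)⁻¹ * h) 0 ∈ U (c + j + m * i) := by
  intro m hm
  set P := newtonSeq (fun k => Δ^[k] h 0) N
  have hP : IsPolySeq U i c P := isPolySeq_newtonSeq hdeep
  refine modEq_one_iff.1 ?_
  calc Δ^[m] (P⁻¹ * h) 0 ≡[U (c + j + m * i)] Δ^[m] P⁻¹ 0 * Δ^[m] h 0 :=
        hP.inv.iterate_mulDiff_mul_modEq hh m 0
    _ ≡[U (c + j + m * i)] (Δ^[m] P 0)⁻¹ * Δ^[m] h 0 :=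
        (modEq_of_le (by omega) (hP.iterate_mulDiff_inv_modEq m 0)).mul ModEq.rfl
    _ ≡[U (c + j + m * i)] (Δ^[m] h 0)⁻¹ * Δ^[m] h 0 := by
        refine (modEq_of_le (b := c + c + m * i) (by omega) ?_).inv.mul ModEq.rfl
        simpa [hm] using iterate_mulDiff_newtonSeq_modEq hdeep m
    _ = 1 := inv_mul_cancel _

theorem IsPolySeq.apply_prime_modEq_of_iterate_mulDiff_mem (hp : p.Prime)
    (hpow : ∀ a, ∀ x ∈ U a, x ^ p ∈ U (p * a)) {j c : ℕ} (hj : 1 ≤ j) {h : ℕ → G}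
    (hh : IsPolySeq U i j h) (hjc : j ≤ c) (hdeep : ∀ m ≤ p, Δ^[m] h 0 ∈ U (c + m * i)) :
    h p ≡[U (j + p * i + 1)] Δ^[p] h 0 * h 0 := by
  by_cases hc : j + p * i + 1 ≤ c
  · have hdeep' : ∀ m ≤ p, Δ^[m] h 0 ≡[U (j + p * i + 1)] 1 := fun m hm =>
      modEq_one_of_mem (by omega) (hdeep m hm)
    calc h p ≡[U (j + p * i + 1)] 1 * 1 :=
          (modEq_one_of_iterate_mulDiff_modEq_one hdeep' le_rfl).trans (mul_one 1).symm
      _ ≡[U (j + p * i + 1)] Δ^[p] h 0 * h 0 :=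
          ((hdeep' p le_rfl).mul (hdeep' 0 (Nat.zero_le _))).symm
  set P := newtonSeq (fun k => Δ^[k] h 0) p
  have hP' : IsPolySeq U i j (P⁻¹ * h) := ((isPolySeq_newtonSeq hdeep).inv.mono hjc).mul hh
  have hdeep' := hh.iterate_mulDiff_newtonSeq_inv_mul_mem hjc hdeep
  have hrec : (P⁻¹ * h) p ≡[U (j + p * i + 1)] 1 := by
    refine (hP'.apply_prime_modEq_of_iterate_mulDiff_mem hp hpow hj (by omega) hdeep').trans ?_
    simpa [P, newtonSeq_apply_zero] using
      modEq_one_of_mem (b := c + j + p * i) (by omega) (hdeep' p le_rfl)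
  calc h p = P p * (P⁻¹ * h) p := by simp
    _ ≡[U (j + p * i + 1)] P p * 1 := ModEq.rfl.mul hrec
    _ ≡[U (j + p * i + 1)] Δ^[p] h 0 * h 0 := by
        rw [mul_one]
        exact modEq_of_le (b := p * (c + i)) (by nlinarith [hp.two_le])
          (newtonSeq_apply_prime_modEq hp hpow hdeep)
termination_by j + p * i + 1 - c

theorem IsPolySeq.apply_prime_modEq (hp : p.Prime) (hpow : ∀ a, ∀ x ∈ U a, x ^ p ∈ U (p * a))
    {j : ℕ} (hj : 1 ≤ j) {h : ℕ → G} (hh : IsPolySeq U i j h) :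
    h p ≡[U (j + p * i + 1)] Δ^[p] h 0 * h 0 :=
  hh.apply_prime_modEq_of_iterate_mulDiff_mem hp hpow hj le_rfl fun m _ =>
    hh.iterate_mulDiff_mem m 0

end Newton

section Engel

variable {G : Type*} [Group G]

theorem engel_add (y x : G) (m n : ℕ) : engel y x (m + n) = engel (engel y x m) x n := by
  induction n with
  | zero => rfl
  | succ n ih => exact congrArg (⁅·, x⁆) ih

theorem conj_engel_eq_iterate (y x : G) (m : ℕ) :
    (fun n => x ^ n * engel y x m * (x ^ n)⁻¹) =
      (fun u => (Δ u)⁻¹)^[m] fun n => x ^ n * y * (x ^ n)⁻¹ := by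
  induction m with
  | zero => rfl
  | succ m ih =>
    rw [Function.iterate_succ_apply', ← ih]
    funext n
    simp only [engel, mulDiff, Pi.inv_apply, commutatorElement_def, pow_succ]
    group

variable {U : ℕ → Subgroup G} {p : ℕ}

theorem pow_prime_pow_mem (hpow : ∀ a, ∀ x ∈ U a, x ^ p ∈ U (p * a)) {i : ℕ} {x : G}
    (hx : x ∈ U i) (a : ℕ) : x ^ p ^ a ∈ U (p ^ a * i) := by
  induction a with
  | zero => simpa using hx
  | succ a ih =>
    rw [pow_succ, pow_mul, mul_comm (p ^ a) p, mul_assoc]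
    exact hpow _ _ ih

variable [IsNSeries U]

theorem engel_mem {i c : ℕ} {x y : G} (hx : x ∈ U i) (hy : y ∈ U c) (m : ℕ) :
    engel y x m ∈ U (c + m * i) := by
  induction m with
  | zero => simpa [engel] using hy
  | succ m ih =>
    rw [add_one_mul, ← add_assoc]
    exact commutator_mem ih hx

variable [∀ c, (U c).Normal]

theorem engel_prime_modEq (hp : p.Prime) (hpow : ∀ a, ∀ x ∈ U a, x ^ p ∈ U (p * a))
    {i j : ℕ} {x y : G} (hj : 1 ≤ j) (hx : x ∈ U i) (hy : y ∈ U j) :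
    engel y x p ≡[U (j + p * i + 1)] ⁅y, x ^ p⁆ := by
  set O : ℕ → G := fun n => x ^ n * y * (x ^ n)⁻¹
  have hO : IsPolySeq U i j O := (IsPolySeq.pow hx).conj (IsPolySeq.const hy)
  set z := Δ^[p] O 0
  have hz : z ^ p ≡[U (j + p * i + 1)] 1 :=
    modEq_one_of_mem (b := p * (j + p * i))
      (by nlinarith [Nat.mul_le_mul_right j hp.two_le, Nat.mul_le_mul_right (p * i) hp.one_le])
      (hpow _ _ (hO.iterate_mulDiff_mem p 0))
  have hnewton : O p ≡[U (j + p * i + 1)] z * y := by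
    simpa [O] using hO.apply_prime_modEq hp hpow hj
  calc engel y x p = (fun u => (Δ u)⁻¹)^[p] O 0 := by rw [← conj_engel_eq_iterate]; simp
    _ ≡[U (j + p * i + 1)] z ^ ((-1 : ℤ) ^ p) :=
        modEq_of_le (by omega) (hO.iterate_inv_mulDiff_modEq p 0)
    _ ≡[U (j + p * i + 1)] z⁻¹ := hz.zpow_neg_one_pow_of_prime hp
    _ ≡[U (j + p * i + 1)] (O p * y⁻¹)⁻¹ := by
        refine (ModEq.inv ?_).symm
        simpa using hnewton.mul (ModEq.refl y⁻¹)
    _ = ⁅y, x ^ p⁆ := by simp [O, commutatorElement_def, mul_assoc]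

theorem engel_prime_mul_modEq (hp : p.Prime) (hpow : ∀ a, ∀ x ∈ U a, x ^ p ∈ U (p * a))
    {i j : ℕ} {x y : G} (hj : 1 ≤ j) (hx : x ∈ U i) (hy : y ∈ U j) (k : ℕ) :
    engel y x (p * k) ≡[U (j + k * (p * i) + 1)] engel y (x ^ p) k := by
  induction k with
  | zero => rfl
  | succ k ih =>
    have hlazard := engel_prime_modEq hp hpow (by omega) hx (engel_mem hx hy (p * k))
    have hcomm := commutatorElement_modEq_left ih (hpow _ _ hx)
    rw [mul_add_one, engel_add]
    exact (modEq_of_le (by nlinarith) hlazard).trans (modEq_of_le (by nlinarith) hcomm)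

theorem engel_prime_pow_modEq (hp : p.Prime) (hpow : ∀ a, ∀ x ∈ U a, x ^ p ∈ U (p * a))
    {j : ℕ} {y : G} (hj : 1 ≤ j) (hy : y ∈ U j) (a : ℕ) {i : ℕ} {x : G} (hx : x ∈ U i) :
    engel y x (p ^ a) ≡[U (j + p ^ a * i + 1)] ⁅y, x ^ p ^ a⁆ := by
  induction a generalizing i x with
  | zero => simp only [pow_zero, pow_one, one_mul]; rfl
  | succ a ih =>
    have hblock := engel_prime_mul_modEq hp hpow hj hx hy (p ^ a)
    have hpow_a := ih (hpow _ _ hx)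
    rw [← pow_mul] at hpow_a
    rw [pow_succ', show j + p * p ^ a * i + 1 = j + p ^ a * (p * i) + 1 by ring]
    exact hblock.trans hpow_a

theorem engel_mem_of_pow_eq_one (hp : p.Prime) (hpow : ∀ a, ∀ x ∈ U a, x ^ p ∈ U (p * a))
    {i j t : ℕ} {x y : G} (hi : 1 ≤ i) (hx : x ∈ U i) (ht : 0 < t) (hxt : x ^ t = 1)
    (hj : 1 ≤ j) (hy : y ∈ U j) : engel y x t ∈ U (j + t * i + 1) := by
  obtain ⟨a, m, hpm, rfl⟩ := Nat.exists_eq_pow_mul_and_not_dvd ht.ne' p hp.one_lt.ne'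
  obtain ⟨m, rfl⟩ := Nat.exists_eq_add_one_of_ne_zero (n := m) (by rintro rfl; simp at ht)
  have hz : x ^ p ^ a ∈ U (p ^ a * i + 1) := by
    refine mem_of_pow_mem_of_pow_eq_one ((Nat.Prime.coprime_iff_not_dvd hp).2 hpm)
      (IsNSeries.antitone ?_ (hpow _ _ (pow_prime_pow_mem hpow hx a))) ?_
    · nlinarith [Nat.mul_le_mul (Nat.one_le_pow a p hp.pos) hi, hp.two_le]
    · rw [← pow_mul, hxt]
  have hpa : engel y x (p ^ a) ∈ U (j + p ^ a * i + 1) := modEq_one_iff.1 <|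
    (engel_prime_pow_modEq hp hpow hj hy a hx).trans
      (modEq_one_of_mem (by omega) (commutator_mem hy hz))
  rw [show p ^ a * (m + 1) = p ^ a + p ^ a * m by ring, engel_add]
  convert engel_mem hx hpa (p ^ a * m) using 2
  ring

end Engel

theorem stmt7_general {G : Type*} [Group G] {p : ℕ} (hp : p.Prime)
    (S : ℕ → Subgroup G) (hS1 : S 1 = ⊤)
    (hmono : ∀ i, S (i + 1) ≤ S i)
    (hcomm : ∀ i j, ∀ x ∈ S i, ∀ y ∈ S j, ⁅x, y⁆ ∈ S (i + j))
    (hpow : ∀ i, ∀ x ∈ S i, x ^ p ∈ S (p * i))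
    (i : ℕ) (hi : 1 ≤ i) (x : G) (hx : x ∈ S i) :
    (∀ j, 1 ≤ j → ∀ y ∈ S j, engel y x p * (⁅y, x ^ p⁆)⁻¹ ∈ S (j + p * i + 1)) ∧
    (∀ t : ℕ, 0 < t → x ^ t = 1 →
      ∀ j, 1 ≤ j → ∀ y ∈ S j, engel y x t ∈ S (j + t * i + 1)) := by
  have : IsNSeries S := ⟨antitone_nat_of_succ_le hmono, fun hx hy => hcomm _ _ _ hx _ hy⟩
  have := IsNSeries.normal_of_eq_top hS1
  exact ⟨fun j hj y hy => modEq_iff_mul_inv_mem.1 (engel_prime_modEq hp hpow hj hx hy),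
    fun t ht hxt j hj y hy => engel_mem_of_pow_eq_one hp hpow hi hx ht hxt hj hy⟩

/-- Lazard's lemma, stated at the level of the group. Given an `N_p`-series
`G = S 1 ≥ S 2 ≥ ⋯` and `x ∈ S i \ S (i+1)`, the identity `(ad x*)^p = ad ((x^p)*)` in the
associated graded Lie algebra `L*(G)` over `F_p` means: for every homogeneous element
`y ∈ S j`, the commutators `[y, ₚ x]` and `[y, x^p]` agree modulo `S (j + p*i + 1)`.
In particular if `x^t = 1` then `x*` is ad-nilpotent of index at most `t`, i.e.
`[y, ₜ x] ∈ S (j + t*i + 1)` for all `y ∈ S j`. -/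
theorem stmt7 {G : Type*} [Group G] {p : ℕ} (hp : p.Prime)
    (S : ℕ → Subgroup G) (hS1 : S 1 = ⊤)
    (hmono : ∀ i, S (i + 1) ≤ S i)
    (hcomm : ∀ i j, ∀ x ∈ S i, ∀ y ∈ S j, ⁅x, y⁆ ∈ S (i + j))
    (hpow : ∀ i, ∀ x ∈ S i, x ^ p ∈ S (p * i))
    (i : ℕ) (hi : 1 ≤ i) (x : G) (hx : x ∈ S i) (hx' : x ∉ S (i + 1)) :
    (∀ j, 1 ≤ j → ∀ y ∈ S j, engel y x p * (⁅y, x ^ p⁆)⁻¹ ∈ S (j + p * i + 1)) ∧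
    (∀ t : ℕ, 0 < t → x ^ t = 1 →
      ∀ j, 1 ≤ j → ∀ y ∈ S j, engel y x t ∈ S (j + t * i + 1)) :=
  stmt7_general hp S hS1 hmono hcomm hpow i hi x hx
end

section
/- Let G be a pronilpotent profinite group, written as the Cartesian product of its Sylow subgroups. Suppose there exist an open normal subgroup H of G, elements u, v ∈ G, and positive integers n, d such that [u·l, ₙ (v·k)^d] = 1 for all l ∈ H and all k ∈ H. Let π be the (finite) set of primes dividing the index [G : H] together with the primes dividing d, and let T = O_{π'}(G) be the product of the Sylow p-subgroups of G for p ∉ π. Then every element of T is a left n-Engel element of T. -/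
/-!
Since `G` is profinite it suffices to prove `[x, ₙ y] = 1` in every finite quotient `Q = G ⧸ U`,
which is nilpotent, hence the direct product of its Sylow subgroups. There the image of `T` has
order prime to `[G : H] d`, so it lies in the image of `H`, its elements have `d`-th roots in it,
and it commutes with the `π`-part of every element. Splitting `u` and `v` into their `π`-parts,
which centralize `T`, and `π'`-parts, which lie in `H`, the law at suitable `l, k ∈ H` becomes
`[a, ₙ b ^ d] [x, ₙ y] = 1` together with `[a, ₙ b ^ d] = 1`.
-/

open scoped commutatorElement

open Subgroup

section Engel

variable {G : Type*} [Group G]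

lemma engel_map {H : Type*} [Group H] (f : G →* H) (g x : G) (n : ℕ) :
    f (engel g x n) = engel (f g) (f x) n := by
  induction n with
  | zero => rfl
  | succ n ih => rw [engel, engel, map_commutatorElement, ih]

lemma engel_one_left (x : G) (n : ℕ) : engel 1 x n = 1 := by
  induction n with
  | zero => rfl
  | succ n ih => rw [engel, ih, commutatorElement_one_left]

lemma engel_prod {H : Type*} [Group H] (g x : G × H) (n : ℕ) :
    engel g x n = (engel g.1 x.1 n, engel g.2 x.2 n) :=
  Prod.ext (engel_map (MonoidHom.fst G H) g x n) (engel_map (MonoidHom.snd G H) g x n)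

lemma engel_mul_mul_of_commute {K L : Subgroup G} (hKL : ∀ k ∈ K, ∀ l ∈ L, Commute k l)
    {a c b e : G} (ha : a ∈ K) (hc : c ∈ K) (hb : b ∈ L) (he : e ∈ L) (n : ℕ) :
    engel (a * b) (c * e) n = engel a c n * engel b e n := by
  let φ : K × L →* G := K.subtype.noncommCoprod L.subtype fun k l => hKL k k.2 l l.2
  calc engel (a * b) (c * e) n
        = engel (φ (⟨a, ha⟩, ⟨b, hb⟩)) (φ (⟨c, hc⟩, ⟨e, he⟩)) n := rfl
    _ = φ (engel (⟨a, ha⟩, ⟨b, hb⟩) (⟨c, hc⟩, ⟨e, he⟩) n) := (engel_map φ _ _ n).symm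
    _ = engel a c n * engel b e n := by
      rw [engel_prod]
      exact congrArg₂ (· * ·) (engel_map K.subtype _ _ n) (engel_map L.subtype _ _ n)

end Engel

theorem Nat.exists_mul_eq_prime_dvd_coprime (e : ℕ) {m : ℕ} (hm : m ≠ 0) :
    ∃ a b, a * b = m ∧ (∀ p, p.Prime → p ∣ a → p ∣ e) ∧ b.Coprime e := by
  induction m using induction_on_primes with
  | zero => exact absurd rfl hm
  | one =>
    exact ⟨1, 1, rfl, fun p hp h => absurd (Nat.dvd_one.mp h) hp.ne_one, coprime_one_left e⟩
  | prime_mul p m hp ih =>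
    obtain ⟨a, b, rfl, ha, hb⟩ := ih (right_ne_zero_of_mul hm)
    by_cases hpe : p ∣ e
    · refine ⟨p * a, b, by ring, fun q hq hqa => ?_, hb⟩
      rcases (Nat.Prime.dvd_mul hq).mp hqa with h | h
      · rwa [(Nat.prime_dvd_prime_iff_eq hq hp).mp h]
      · exact ha q hq h
    · exact ⟨a, p * b, by ring, ha, ((Nat.Prime.coprime_iff_not_dvd hp).mpr hpe).mul_left hb⟩

theorem exists_mul_eq_orderOf_dvd_of_coprime {G : Type*} [Group G] {g : G} {a b : ℕ}
    (hab : a.Coprime b) (hg : orderOf g ∣ a * b) :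
    ∃ g₁ g₂ : G, g = g₁ * g₂ ∧ orderOf g₁ ∣ a ∧ orderOf g₂ ∣ b := by
  obtain ⟨α, β, hαβ⟩ := Nat.isCoprime_iff_coprime.mpr hab
  have hg' : g ^ ((a : ℤ) * b) = 1 := by exact_mod_cast orderOf_dvd_iff_pow_eq_one.mp hg
  refine ⟨g ^ (β * b), g ^ (α * a), ?_, ?_, ?_⟩
  · rw [← zpow_add, add_comm, hαβ, zpow_one]
  · rw [← Int.natCast_dvd_natCast, orderOf_dvd_iff_zpow_eq_one, ← zpow_mul,
      show β * b * a = (a * b : ℤ) * β by ring, zpow_mul, hg', one_zpow]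
  · rw [← Int.natCast_dvd_natCast, orderOf_dvd_iff_zpow_eq_one, ← zpow_mul,
      show α * a * b = (a * b : ℤ) * α by ring, zpow_mul, hg', one_zpow]

theorem Subgroup.mem_of_coprime_orderOf_index {G : Type*} [Group G] (H : Subgroup G) [H.Normal]
    {g : G} (h : (orderOf g).Coprime H.index) : g ∈ H := by
  obtain ⟨m, hm⟩ := exists_pow_eq_self_of_coprime h.symm
  exact hm ▸ pow_mem (H.pow_index_mem g) m

theorem commute_of_coprime_orderOf {Q : Type*} [Group Q] [Finite Q] [Group.IsNilpotent Q]
    {g t : Q} (h : (orderOf g).Coprime (orderOf t)) : Commute g t := by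
  obtain ⟨e⟩ := (Group.isNilpotent_of_finite_tfae (G := Q)).out 0 4 |>.mp ‹_›
  -- in each Sylow factor, one of the two components has order dividing both orders
  suffices Commute (e.symm g) (e.symm t) by simpa using this.map e
  refine Pi.commute_iff.mpr fun p => Pi.commute_iff.mpr fun P => ?_
  have : Fact (p : ℕ).Prime := ⟨Nat.prime_of_mem_primeFactors p.2⟩
  let ev := (Pi.evalMonoidHom (fun P : Sylow p Q => (P : Subgroup Q)) P).comp
    (Pi.evalMonoidHom (fun p : (Nat.card Q).primeFactors => ∀ P : Sylow p Q, (P : Subgroup Q)) p)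
  obtain ⟨i, hi⟩ := IsPGroup.iff_orderOf.mp P.isPGroup' (e.symm g p P)
  obtain ⟨j, hj⟩ := IsPGroup.iff_orderOf.mp P.isPGroup' (e.symm t p P)
  have hij : ((p : ℕ) ^ i).Coprime (p ^ j) := by
    rw [← hi, ← hj]
    refine (h.coprime_dvd_left ?_).coprime_dvd_right ?_
    · exact (orderOf_map_dvd ev _).trans (e.symm.orderOf_eq g).dvd
    · exact (orderOf_map_dvd ev _).trans (e.symm.orderOf_eq t).dvd
  rcases Nat.eq_zero_or_pos i with rfl | hi0
  · rw [orderOf_eq_one_iff.mp (hi.trans (pow_zero _))]; exact Commute.one_left _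
  rcases Nat.eq_zero_or_pos j with rfl | hj0
  · rw [orderOf_eq_one_iff.mp (hj.trans (pow_zero _))]; exact Commute.one_right _
  exact absurd (Nat.eq_one_of_dvd_coprimes hij (dvd_pow_self _ hi0.ne') (dvd_pow_self _ hj0.ne'))
    this.out.ne_one

theorem exists_mul_eq_mem_centralizer_mem {Q : Type*} [Group Q] [Finite Q] [Group.IsNilpotent Q]
    (H T : Subgroup Q) [H.Normal] (hT : (Nat.card T).Coprime H.index) (g : Q) :
    ∃ g₁ ∈ centralizer (T : Set Q), ∃ g₂ ∈ H, g = g₁ * g₂ := by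
  obtain ⟨a, b, hab, ha, hb⟩ := Nat.exists_mul_eq_prime_dvd_coprime H.index (orderOf_pos g).ne'
  have hab' : a.Coprime b := Nat.coprime_of_dvd fun p hp hpa hpb =>
    hp.ne_one (Nat.eq_one_of_dvd_coprimes hb hpb (ha p hp hpa))
  obtain ⟨g₁, g₂, hg, hg₁, hg₂⟩ :=
    exists_mul_eq_orderOf_dvd_of_coprime hab' (dvd_of_eq hab.symm)
  refine ⟨g₁, mem_centralizer_iff.mpr fun t ht => ?_, g₂,
    H.mem_of_coprime_orderOf_index (hb.coprime_dvd_left hg₂), hg⟩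
  have hcop : (orderOf g₁).Coprime (orderOf t) := Nat.coprime_of_dvd fun p hp hpg hpt =>
    hp.ne_one (Nat.eq_one_of_dvd_coprimes hT (hpt.trans (T.orderOf_dvd_natCard ht))
      (ha p hp (hpg.trans hg₁)))
  exact (commute_of_coprime_orderOf hcop).symm.eq

theorem engel_eq_one_of_forall_engel_mul_pow_eq_one {Q : Type*} [Group Q] [Finite Q]
    [Group.IsNilpotent Q] {H T : Subgroup Q} [H.Normal] {u v : Q} {n d : ℕ}
    (hlaw : ∀ l ∈ H, ∀ k ∈ H, engel (u * l) ((v * k) ^ d) n = 1)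
    (hT : (Nat.card T).Coprime (H.index * d)) {x y : Q} (hx : x ∈ T) (hy : y ∈ T) :
    engel x y n = 1 := by
  have hTH : (Nat.card T).Coprime H.index := hT.coprime_dvd_right (dvd_mul_right _ _)
  have hTd : (Nat.card T).Coprime d := hT.coprime_dvd_right (dvd_mul_left _ _)
  have hT_le : T ≤ H := fun t ht =>
    H.mem_of_coprime_orderOf_index (hTH.coprime_dvd_left (T.orderOf_dvd_natCard ht))
  have hcomm : ∀ k ∈ centralizer (T : Set Q), ∀ l ∈ T, Commute k l :=
    fun k hk l hl => (mem_centralizer_iff.mp hk l hl).symm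
  obtain ⟨a, ha, a', ha', rfl⟩ := exists_mul_eq_mem_centralizer_mem H T hTH u
  obtain ⟨b, hb, b', hb', rfl⟩ := exists_mul_eq_mem_centralizer_mem H T hTH v
  -- `y ^ m` is a `d`-th root of `y` in `T`
  obtain ⟨m, hm⟩ :=
    exists_pow_eq_self_of_coprime (hTd.symm.coprime_dvd_right (T.orderOf_dvd_natCard hy))
  have hz : y ^ m ∈ T := pow_mem hy m
  have hv : (b * b' * (b'⁻¹ * y ^ m)) ^ d = b ^ d * y := by
    rw [mul_assoc, mul_inv_cancel_left, (hcomm b hb _ hz).mul_pow, ← pow_mul, mul_comm, pow_mul,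
      hm]
  have hk : b'⁻¹ * y ^ m ∈ H := mul_mem (inv_mem hb') (hT_le hz)
  have hx' := hlaw (a'⁻¹ * x) (mul_mem (inv_mem ha') (hT_le hx)) _ hk
  have h1 := hlaw a'⁻¹ (inv_mem ha') _ hk
  rw [mul_assoc, mul_inv_cancel_left, hv,
    engel_mul_mul_of_commute hcomm ha (pow_mem hb d) hx hy] at hx'
  rw [mul_inv_cancel_right, hv, ← mul_one a,
    engel_mul_mul_of_commute hcomm ha (pow_mem hb d) (one_mem T) hy, engel_one_left,
    mul_one] at h1
  rwa [h1, one_mul] at hx'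

theorem eq_one_of_forall_mem_openNormal {G : Type*} [Group G] [TopologicalSpace G]
    [IsTopologicalGroup G] [CompactSpace G] [T2Space G] [TotallyDisconnectedSpace G] {g : G}
    (h : ∀ U : Subgroup G, U.Normal → IsOpen (U : Set G) → g ∈ U) : g = 1 := by
  by_contra hg
  obtain ⟨V, hV, hV1, hVg⟩ := compact_exists_isClopen_in_isOpen isClosed_singleton.isOpen_compl
    (Ne.symm hg : (1 : G) ∉ ({g} : Set G))
  obtain ⟨U, hU⟩ := IsTopologicalGroup.exist_openNormalSubgroup_sub_clopen_nhds_of_one hV hV1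
  exact hVg (hU (h U.toSubgroup inferInstance U.isOpen)) rfl

theorem not_dvd_natCard_map_mk {G : Type*} [Group G] [TopologicalSpace G] {π : Set ℕ}
    {T : Subgroup G}
    (hT : ∀ U : Subgroup T, U.Normal → IsOpen (U : Set T) → ∀ r ∈ π, ¬ r ∣ U.index)
    (U : Subgroup G) [U.Normal] (hU : IsOpen (U : Set G)) :
    ∀ r ∈ π, ¬ r ∣ Nat.card (T.map (QuotientGroup.mk' U)) := by
  rw [← relIndex_ker, QuotientGroup.ker_mk']
  exact hT (U.subgroupOf T) inferInstance (hU.preimage continuous_subtype_val)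

theorem stmt14_general {G : Type*} [Group G] [TopologicalSpace G] [IsTopologicalGroup G]
    [CompactSpace G] [T2Space G] [TotallyDisconnectedSpace G]
    (hpronil : ∀ (U : Subgroup G) [U.Normal], IsOpen (U : Set G) → Group.IsNilpotent (G ⧸ U))
    (H : Subgroup G) (hHn : H.Normal)
    (u v : G) (n d : ℕ)
    (hlaw : ∀ l ∈ H, ∀ k ∈ H, engel (u * l) ((v * k) ^ d) n = 1)
    (π : Set ℕ) (hπ : π = {r : ℕ | r.Prime ∧ (r ∣ H.index ∨ r ∣ d)})
    (T : Subgroup G)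
    (hTπ : ∀ U : Subgroup T, U.Normal → IsOpen (U : Set T) → ∀ r ∈ π, ¬ r ∣ U.index) :
    ∀ y ∈ T, ∀ x ∈ T, engel x y n = 1 := by
  intro y hy x hx
  refine eq_one_of_forall_mem_openNormal fun U hU hUo => ?_
  have : Finite (G ⧸ U) := U.quotient_finite_of_isOpen hUo
  have : Group.IsNilpotent (G ⧸ U) := hpronil U hUo
  let f := QuotientGroup.mk' U
  have : (H.map f).Normal := hHn.map f (QuotientGroup.mk'_surjective U)
  have hlawQ : ∀ l ∈ H.map f, ∀ k ∈ H.map f, engel (f u * l) ((f v * k) ^ d) n = 1 := by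
    rintro _ ⟨l, hl, rfl⟩ _ ⟨k, hk, rfl⟩
    rw [← map_mul, ← map_mul, ← map_pow, ← engel_map, hlaw l hl k hk, map_one]
  have hT : (Nat.card (T.map f)).Coprime ((H.map f).index * d) := by
    refine Nat.coprime_of_dvd fun r hr hrT hrH => not_dvd_natCard_map_mk hTπ U hUo r ?_ hrT
    rw [hπ]
    exact ⟨hr, ((Nat.Prime.dvd_mul hr).mp hrH).imp_left
      (·.trans (index_map_dvd H (QuotientGroup.mk'_surjective U)))⟩
  rw [← QuotientGroup.eq_one_iff, ← QuotientGroup.mk'_apply, engel_map]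
  exact engel_eq_one_of_forall_engel_mul_pow_eq_one hlawQ hT (mem_map_of_mem f hx)
    (mem_map_of_mem f hy)

/-- Let `G` be a pronilpotent profinite group with an open normal subgroup `H`, elements
`u, v` and positive integers `n, d` such that `[u·l, ₙ (v·k)^d] = 1` for all `l, k ∈ H`.
Let `π` consist of the primes dividing `[G : H]` together with those dividing `d`, and let
`T = O_{π'}(G)` (the largest closed normal subgroup all of whose finite quotients have order
coprime to every prime of `π`).  Then every element of `T` is a left `n`-Engel element
of `T`. -/
theorem stmt14 {G : Type*} [Group G] [TopologicalSpace G] [IsTopologicalGroup G]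
    [CompactSpace G] [T2Space G] [TotallyDisconnectedSpace G]
    (hpronil : ∀ (U : Subgroup G) [U.Normal], IsOpen (U : Set G) → Group.IsNilpotent (G ⧸ U))
    (H : Subgroup G) (hHn : H.Normal) (hHo : IsOpen (H : Set G))
    (u v : G) (n d : ℕ) (hn : 0 < n) (hd : 0 < d)
    (hlaw : ∀ l ∈ H, ∀ k ∈ H, engel (u * l) ((v * k) ^ d) n = 1)
    (π : Set ℕ) (hπ : π = {r : ℕ | r.Prime ∧ (r ∣ H.index ∨ r ∣ d)})
    (T : Subgroup G) (hTn : T.Normal) (hTc : IsClosed (T : Set G))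
    (hTπ : ∀ U : Subgroup T, U.Normal → IsOpen (U : Set T) → ∀ r ∈ π, ¬ r ∣ U.index)
    (hTmax : ∀ T' : Subgroup G, T'.Normal → IsClosed (T' : Set G) →
      (∀ U : Subgroup T', U.Normal → IsOpen (U : Set T') → ∀ r ∈ π, ¬ r ∣ U.index) →
      T' ≤ T) :
    ∀ y ∈ T, ∀ x ∈ T, engel x y n = 1 :=
  stmt14_general hpronil H hHn u v n d hlaw π hπ T hTπ
end
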